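/- Let μ be a probability measure on ℝ^d with ∫‖z‖² dμ(z) < ∞, let t > 0, and let φ_t be the density of N(0, tI_d). Define D(x) = ∫ φ_t(x−z) dμ(z) and m_t(x) = (∫ z φ_t(x−z) dμ(z)) / D(x). Then there exists a finite constant C_t (depending on t and μ) such that ‖m_t(x)‖ ≤ C_t (1 + ‖x‖) for all x ∈ ℝ^d. -/

import Mathlib

open MeasureTheory

/-- The density of the Gaussian distribution `N(0, t I_d)` on `ℝ^d`. -/
noncomputable def gaussDensity (d : ℕ) (t : ℝ) (u : EuclideanSpace ℝ (Fin d)) : ℝ :=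
  (2 * Real.pi * t) ^ (-(d : ℝ) / 2) * Real.exp (-‖u‖ ^ 2 / (2 * t))

/-!
Restricting the integral to a ball `closedBall 0 K` of positive mass bounds the denominator
below: `D x ≥ μ(closedBall 0 K) · (2πt)^(-d/2) · exp (-(‖x‖ + K)² / (2t))`.
For the numerator, `‖z‖ ≤ ‖x‖ + ‖x - z‖`, and for every `r ≥ 0`
`‖u‖ φ_t(u) ≤ r φ_t(u) + (t + 1) (2πt)^(-d/2) exp (-r² / (4t))`.
At `r = 2 (‖x‖ + K)` this Gaussian tail is dominated by the lower bound for `D x`, whence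
`‖m_t(x)‖ ≤ 3 ‖x‖ + 2K + (t + 1) / μ(closedBall 0 K)`.
-/

open Real Metric

lemma mul_exp_neg_sq_div_le {t : ℝ} (ht : 0 < t) (s : ℝ) :
    s * exp (-s ^ 2 / (4 * t)) ≤ t + 1 := by
  set y := s ^ 2 / (4 * t)
  have hs : s ≤ t + y := by
    have : 0 ≤ (s - 2 * t) ^ 2 / (4 * t) := by positivity
    have : (s - 2 * t) ^ 2 / (4 * t) = t + y - s := by simp only [y]; field_simp; ring
    linarith
  have hexp : s ≤ (t + 1) * exp y := by
    nlinarith [add_one_le_exp y, one_le_exp (show 0 ≤ y by positivity)]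
  calc s * exp (-s ^ 2 / (4 * t)) = s * exp (-y) := by rw [neg_div]
    _ ≤ (t + 1) * exp y * exp (-y) := by gcongr
    _ = t + 1 := by rw [mul_assoc, ← exp_add, add_neg_cancel, exp_zero, mul_one]

lemma mul_exp_neg_sq_le {t r : ℝ} (ht : 0 < t) (hr : 0 ≤ r) (s : ℝ) :
    s * exp (-s ^ 2 / (2 * t))
      ≤ r * exp (-s ^ 2 / (2 * t)) + (t + 1) * exp (-r ^ 2 / (4 * t)) := by
  rcases le_or_gt s r with hsr | hrs
  · nlinarith [exp_pos (-s ^ 2 / (2 * t)), exp_pos (-r ^ 2 / (4 * t))]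
  have hsplit : exp (-s ^ 2 / (2 * t)) = exp (-s ^ 2 / (4 * t)) * exp (-s ^ 2 / (4 * t)) := by
    rw [← exp_add]; ring_nf
  have htail : exp (-s ^ 2 / (4 * t)) ≤ exp (-r ^ 2 / (4 * t)) := by
    gcongr
  calc s * exp (-s ^ 2 / (2 * t))
      = s * exp (-s ^ 2 / (4 * t)) * exp (-s ^ 2 / (4 * t)) := by rw [hsplit, mul_assoc]
    _ ≤ (t + 1) * exp (-r ^ 2 / (4 * t)) :=
      mul_le_mul (mul_exp_neg_sq_div_le ht s) htail (exp_pos _).le (by positivity)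
    _ ≤ _ := le_add_of_nonneg_left (by positivity)

noncomputable def gaussNormConst (d : ℕ) (t : ℝ) : ℝ := (2 * π * t) ^ (-(d : ℝ) / 2)

section gaussDensity

variable {d : ℕ} {t : ℝ}

lemma gaussNormConst_pos (ht : 0 < t) : 0 < gaussNormConst d t := by
  unfold gaussNormConst; positivity

lemma gaussDensity_eq (u : EuclideanSpace ℝ (Fin d)) :
    gaussDensity d t u = gaussNormConst d t * exp (-‖u‖ ^ 2 / (2 * t)) := rfl

lemma gaussDensity_nonneg (ht : 0 ≤ t) (u : EuclideanSpace ℝ (Fin d)) :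
    0 ≤ gaussDensity d t u := by
  unfold gaussDensity; positivity

lemma gaussDensity_le (ht : 0 ≤ t) (u : EuclideanSpace ℝ (Fin d)) :
    gaussDensity d t u ≤ gaussNormConst d t := by
  unfold gaussDensity gaussNormConst
  refine mul_le_of_le_one_right (by positivity) (exp_le_one_iff.mpr ?_)
  rw [neg_div]
  exact neg_nonpos.mpr (by positivity)

@[fun_prop]
lemma continuous_gaussDensity : Continuous (gaussDensity d t) := by
  unfold gaussDensity; fun_prop

lemma norm_mul_gaussDensity_le (ht : 0 < t) {r : ℝ} (hr : 0 ≤ r)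
    (u : EuclideanSpace ℝ (Fin d)) :
    ‖u‖ * gaussDensity d t u
      ≤ r * gaussDensity d t u + (t + 1) * (gaussNormConst d t * exp (-r ^ 2 / (4 * t))) := by
  have := mul_le_mul_of_nonneg_left (mul_exp_neg_sq_le ht hr ‖u‖)
    (gaussNormConst_pos (d := d) ht).le
  rw [gaussDensity_eq]
  linarith

end gaussDensity

noncomputable def posteriorMean (d : ℕ) (t : ℝ) (μ : Measure (EuclideanSpace ℝ (Fin d)))
    (x : EuclideanSpace ℝ (Fin d)) : EuclideanSpace ℝ (Fin d) :=
  (∫ z, gaussDensity d t (x - z) ∂μ)⁻¹ • ∫ z, gaussDensity d t (x - z) • z ∂μ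

section integral

variable {d : ℕ} {t : ℝ} {μ : Measure (EuclideanSpace ℝ (Fin d))} [IsFiniteMeasure μ]

lemma integrable_gaussDensity_sub (ht : 0 ≤ t) (x : EuclideanSpace ℝ (Fin d)) :
    Integrable (fun z => gaussDensity d t (x - z)) μ :=
  .of_bound (by fun_prop : Continuous fun z => gaussDensity d t (x - z)).aestronglyMeasurable _
    (ae_of_all _ fun z => by
      rw [norm_of_nonneg (gaussDensity_nonneg ht _)]; exact gaussDensity_le ht _)

lemma mul_measureReal_closedBall_le_integral_gaussDensity (ht : 0 < t) (K : ℝ)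
    (x : EuclideanSpace ℝ (Fin d)) :
    gaussNormConst d t * exp (-(‖x‖ + K) ^ 2 / (2 * t)) * μ.real (closedBall 0 K)
      ≤ ∫ z, gaussDensity d t (x - z) ∂μ := by
  have hint := integrable_gaussDensity_sub (μ := μ) ht.le x
  have hball : ∀ z ∈ closedBall (0 : EuclideanSpace ℝ (Fin d)) K,
      gaussNormConst d t * exp (-(‖x‖ + K) ^ 2 / (2 * t)) ≤ gaussDensity d t (x - z) := by
    intro z hz
    have hz : ‖x - z‖ ≤ ‖x‖ + K := (norm_sub_le x z).trans (by simpa using hz)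
    rw [gaussDensity_eq]
    gcongr
    exact (gaussNormConst_pos ht).le
  exact (setIntegral_ge_of_const_le_real measurableSet_closedBall (measure_ne_top _ _) hball
    hint.integrableOn).trans
    (setIntegral_le_integral hint (ae_of_all _ fun z => gaussDensity_nonneg ht.le _))

lemma norm_integral_gaussDensity_smul_le (ht : 0 < t) {r : ℝ} (hr : 0 ≤ r)
    (x : EuclideanSpace ℝ (Fin d)) :
    ‖∫ z, gaussDensity d t (x - z) • z ∂μ‖
      ≤ (‖x‖ + r) * ∫ z, gaussDensity d t (x - z) ∂μ
        + (t + 1) * (gaussNormConst d t * exp (-r ^ 2 / (4 * t))) * μ.real Set.univ := by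
  set A := (t + 1) * (gaussNormConst d t * exp (-r ^ 2 / (4 * t)))
  have hint := integrable_gaussDensity_sub (μ := μ) ht.le x
  have hpt : ∀ z,
      ‖gaussDensity d t (x - z) • z‖ ≤ (‖x‖ + r) * gaussDensity d t (x - z) + A := by
    intro z
    have hφ := gaussDensity_nonneg (d := d) ht.le (x - z)
    have hz : ‖z‖ ≤ ‖x‖ + ‖x - z‖ := by simpa using norm_sub_le x (x - z)
    have := norm_mul_gaussDensity_le ht hr (x - z)
    rw [norm_smul, norm_of_nonneg hφ]
    nlinarith
  calc ‖∫ z, gaussDensity d t (x - z) • z ∂μ‖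
      ≤ ∫ z, ‖gaussDensity d t (x - z) • z‖ ∂μ := norm_integral_le_integral_norm _
    _ ≤ ∫ z, ((‖x‖ + r) * gaussDensity d t (x - z) + A) ∂μ :=
      integral_mono_of_nonneg (ae_of_all _ fun _ => norm_nonneg _)
        ((hint.const_mul _).add (integrable_const A)) (ae_of_all _ hpt)
    _ = _ := by
      rw [integral_add (hint.const_mul _) (integrable_const A), integral_const_mul,
        integral_const, smul_eq_mul, mul_comm A]

lemma norm_posteriorMean_le (ht : 0 < t) {K : ℝ} (hK : 0 < μ.real (closedBall 0 K))
    (x : EuclideanSpace ℝ (Fin d)) :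
    ‖posteriorMean d t μ x‖
      ≤ 3 * ‖x‖ + 2 * K + (t + 1) * μ.real Set.univ / μ.real (closedBall 0 K) := by
  set D := ∫ z, gaussDensity d t (x - z) ∂μ
  set m := μ.real (closedBall (0 : EuclideanSpace ℝ (Fin d)) K)
  set L := gaussNormConst d t * exp (-(‖x‖ + K) ^ 2 / (2 * t))
  have hK0 : 0 ≤ K := nonempty_closedBall.mp <| nonempty_of_measure_ne_zero
    fun h : μ (closedBall 0 K) = 0 => hK.ne' (by simp [m, Measure.real, h])
  have hlow : L * m ≤ D := mul_measureReal_closedBall_le_integral_gaussDensity ht K x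
  have hD : 0 < D :=
    lt_of_lt_of_le (mul_pos (mul_pos (gaussNormConst_pos ht) (exp_pos _)) hK) hlow
  have htail : gaussNormConst d t * exp (-(2 * (‖x‖ + K)) ^ 2 / (4 * t)) ≤ L := by
    refine mul_le_mul_of_nonneg_left (exp_le_exp.mpr ?_) (gaussNormConst_pos ht).le
    rw [div_le_div_iff₀ (by positivity) (by positivity)]
    nlinarith [mul_nonneg (sq_nonneg (‖x‖ + K)) ht.le]
  have hnum :=
    norm_integral_gaussDensity_smul_le (μ := μ) ht (r := 2 * (‖x‖ + K)) (by positivity) x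
  rw [posteriorMean, norm_smul, norm_inv, norm_of_nonneg hD.le, inv_mul_le_iff₀ hD]
  have : L ≤ D / m := (le_div_iff₀ hK).mpr hlow
  calc _ ≤ _ := hnum
    _ ≤ (‖x‖ + 2 * (‖x‖ + K)) * D + (t + 1) * (D / m) * μ.real Set.univ := by
      gcongr; linarith
    _ = D * (3 * ‖x‖ + 2 * K + (t + 1) * μ.real Set.univ / m) := by ring

end integral

theorem stmt5_general (d : ℕ) (μ : Measure (EuclideanSpace ℝ (Fin d))) [IsProbabilityMeasure μ]
    (t : ℝ) (ht : 0 < t)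
    (D : EuclideanSpace ℝ (Fin d) → ℝ)
    (hD : D = fun x => ∫ z, gaussDensity d t (x - z) ∂μ)
    (mt : EuclideanSpace ℝ (Fin d) → EuclideanSpace ℝ (Fin d))
    (hmt : mt = fun x => (D x)⁻¹ • ∫ z, gaussDensity d t (x - z) • z ∂μ) :
    ∃ Ct : ℝ, ∀ x, ‖mt x‖ ≤ Ct * (1 + ‖x‖) := by
  obtain ⟨n, hn⟩ : ∃ n : ℕ, 0 < μ (closedBall 0 n) :=
    exists_measure_pos_of_not_measure_iUnion_null (by simp [iUnion_closedBall_nat])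
  have hK : 0 < μ.real (closedBall 0 n) := ENNReal.toReal_pos hn.ne' (measure_ne_top _ _)
  set q := (t + 1) / μ.real (closedBall 0 n)
  have hq : 0 ≤ q := by positivity
  refine ⟨3 + 2 * n + q, fun x => ?_⟩
  subst hmt hD
  calc _ ≤ 3 * ‖x‖ + 2 * n + (t + 1) * μ.real Set.univ / μ.real (closedBall 0 n) :=
        norm_posteriorMean_le ht hK x
    _ ≤ (3 + 2 * n + q) * (1 + ‖x‖) := by
        rw [probReal_univ, mul_one]
        nlinarith [norm_nonneg x, mul_nonneg hq (norm_nonneg x), (n.cast_nonneg : (0 : ℝ) ≤ n)]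

/-- linear growth of the posterior mean: for a probability measure `μ`
on `ℝ^d` with finite second moment and `t > 0`, the posterior mean
`m_t(x) = (∫ z φ_t(x−z) dμ(z)) / D(x)` with `D(x) = ∫ φ_t(x−z) dμ(z)` satisfies
`‖m_t(x)‖ ≤ C_t (1 + ‖x‖)` for some finite constant `C_t`. -/
theorem stmt5 (d : ℕ) (μ : Measure (EuclideanSpace ℝ (Fin d))) [IsProbabilityMeasure μ]
    (hmom : Integrable (fun z => ‖z‖ ^ 2) μ) (t : ℝ) (ht : 0 < t)
    (D : EuclideanSpace ℝ (Fin d) → ℝ)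
    (hD : D = fun x => ∫ z, gaussDensity d t (x - z) ∂μ)
    (mt : EuclideanSpace ℝ (Fin d) → EuclideanSpace ℝ (Fin d))
    (hmt : mt = fun x => (D x)⁻¹ • ∫ z, gaussDensity d t (x - z) • z ∂μ) :
    ∃ Ct : ℝ, ∀ x, ‖mt x‖ ≤ Ct * (1 + ‖x‖) :=
  stmt5_general d μ t ht D hD mt hmt
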